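/- (From Lemma A.2: degree reduction annihilates high modes.) Let d ≥ 1, N ≥ 1 and 1 ≤ i ≤ N. Suppose p : ℝ^d → ℝ is a polynomial function satisfying ∫_{T_d} p(x) q(x) dx = 0 for every polynomial q of total degree at most N−i, and suppose c is a vector indexed by multi-indices of weight N such that p(x) = Σ_{|α|=N} c_α b^N_α(x) for all x ∈ ℝ^d. Then (E^N_{N−i})ᵀ c = 0, i.e., Σ_{|α|=N} (E^N_{N−i})_{α,β} c_α = 0 for every multi-index β of weight N−i. -/

import Mathlib

open MeasureTheory

/-- The unit `n`-simplex `T_n = {x ∈ ℝ^n : x_i ≥ 0, Σ x_i ≤ 1}`. -/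
def unitSimplex (n : ℕ) : Set (Fin n → ℝ) := {x | (∀ i, 0 ≤ x i) ∧ ∑ i, x i ≤ 1}

/-- Barycentric coordinates `λ(x) = (x_1, …, x_n, 1 − Σ_i x_i)` of `x ∈ ℝ^n`. -/
noncomputable def bary (n : ℕ) (x : Fin n → ℝ) : Fin (n + 1) → ℝ :=
  Fin.snoc x (1 - ∑ i, x i)

/-- The Bernstein basis function `b^N_α(x) = (N!/∏_j α_j!) · ∏_j λ(x)_j^{α_j}` on `ℝ^n`,
for a multi-index `α : Fin (n+1) → ℕ`. -/
noncomputable def bernFn (n N : ℕ) (α : Fin (n + 1) → ℕ) (x : Fin n → ℝ) : ℝ :=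
  ((N.factorial : ℝ) / ∏ j, ((α j).factorial : ℝ)) * ∏ j, bary n x j ^ α j

/-- Entry `(β, α)` of the one-degree elevation matrix `E^m_{m−1}` (real entries) for
multi-indices over `Fin n`: `(α_j + 1)/m` if `β = α + e_j` for some `j`, `0` otherwise. -/
noncomputable def elevEntryR (n m : ℕ) (β α : Fin n → ℕ) : ℝ :=
  ∑ j, if β = α + Pi.single j 1 then ((α j : ℝ) + 1) / (m : ℝ) else 0

/-- Entry `(β, α)` of the composite elevation matrix
`E^N_{N−i} = E^N_{N−1} E^{N−1}_{N−2} ⋯ E^{N−i+1}_{N−i}` (with `E^N_N` the identity),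
for multi-indices over `Fin n` (`β` of weight `N`, `α` of weight `N−i`). -/
noncomputable def elevComp (n N : ℕ) : ℕ → (Fin n → ℕ) → (Fin n → ℕ) → ℝ
  | 0, β, α => if β = α then 1 else 0
  | i + 1, β, α => ∑ γ ∈ Finset.Nat.antidiagonalTuple n (N - i),
      elevComp n N i β γ * elevEntryR n (N - i) γ α

/-!
The entry `(α, β)` of `E^N_{N-i}` is `∏_j C(α_j, β_j) · (N-i)! i! / N!`, so it suffices to show
`∑_α c_α ∏_j C(α_j, β_j) = 0` whenever `|β| = N - i`. The Dirichlet integral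
`∫_{T_d} λ^γ = ∏_j γ_j! / (|γ| + d)!` gives the moments
`∫_{T_d} b^N_α λ^γ = N! / (N + |γ| + d)! · ∏_j (α_j + γ_j)! / α_j!`, and the binomial inversion
`∑_{g ≤ b} (-1)^(b+g) C(b, g) C(a+g, g) = C(a, b)` turns these into a polynomial `q_β` of degree
`|β|` with `∫_{T_d} b^N_α q_β = ∏_j C(α_j, β_j)`. Orthogonality of `p` to `q_β` is the claim.
-/
open Finset
open scoped Nat

lemma isClosed_unitSimplex (n : ℕ) : IsClosed (unitSimplex n) := by
  have : unitSimplex n = (⋂ i, {x | 0 ≤ x i}) ∩ {x | ∑ i, x i ≤ 1} := by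
    ext x; simp [unitSimplex]
  rw [this]
  exact (isClosed_iInter fun i => isClosed_le continuous_const (continuous_apply i)).inter
    (isClosed_le (by fun_prop) continuous_const)

lemma isCompact_unitSimplex (n : ℕ) : IsCompact (unitSimplex n) := by
  refine (isCompact_univ_pi fun _ => isCompact_Icc (a := (0 : ℝ)) (b := 1)).of_isClosed_subset
    (isClosed_unitSimplex n) fun x hx i _ => ⟨hx.1 i, ?_⟩
  exact (single_le_sum (fun j _ => hx.1 j) (mem_univ i)).trans hx.2

lemma integrableOn_unitSimplex {n : ℕ} {f : (Fin n → ℝ) → ℝ} (hf : Continuous f) :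
    IntegrableOn f (unitSimplex n) :=
  hf.continuousOn.integrableOn_compact (isCompact_unitSimplex n)

lemma snoc_mem_unitSimplex_iff {n : ℕ} (y : Fin n → ℝ) (t : ℝ) :
    (Fin.snoc y t : Fin (n + 1) → ℝ) ∈ unitSimplex (n + 1) ↔
      y ∈ unitSimplex n ∧ t ∈ Set.Icc 0 (1 - ∑ i, y i) := by
  simp only [unitSimplex, Set.mem_ofPred_eq, Fin.forall_fin_succ', Fin.sum_univ_castSucc,
    Fin.snoc_castSucc, Fin.snoc_last, Set.mem_Icc]
  constructor
  · rintro ⟨⟨hy, ht⟩, hs⟩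
    exact ⟨⟨hy, by linarith⟩, ht, by linarith⟩
  · rintro ⟨⟨hy, -⟩, ht, hs⟩
    exact ⟨⟨hy, ht⟩, by linarith⟩

theorem setIntegral_unitSimplex_succ {n : ℕ} {F : (Fin (n + 1) → ℝ) → ℝ} (hF : Continuous F) :
    ∫ x in unitSimplex (n + 1), F x =
      ∫ y in unitSimplex n, ∫ t in Set.Icc 0 (1 - ∑ i, y i), F (Fin.snoc y t) := by
  have he := (MeasureTheory.volume_preserving_piFinSuccAbove (fun _ : Fin (n + 1) => ℝ)
    (Fin.last n)).symm
  have he_apply : ∀ z : ℝ × (Fin n → ℝ),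
      (MeasurableEquiv.piFinSuccAbove (fun _ => ℝ) (Fin.last n)).symm z = Fin.snoc z.2 z.1 :=
    fun z => Fin.insertNth_last' z.1 z.2
  set G := (unitSimplex (n + 1)).indicator F
  have hG : Integrable G :=
    (integrableOn_unitSimplex hF).integrable_indicator (isClosed_unitSimplex _).measurableSet
  have hslice : ∀ y t, G (Fin.snoc y t) = (unitSimplex n).indicator
      (fun y => (Set.Icc 0 (1 - ∑ i, y i)).indicator (fun t => F (Fin.snoc y t)) t) y := by
    intro y t
    classical
    simp only [G, Set.indicator_apply, snoc_mem_unitSimplex_iff, ite_and]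
  have hinner : ∀ y, ∫ t, G (Fin.snoc y t) = (unitSimplex n).indicator
      (fun y => ∫ t in Set.Icc 0 (1 - ∑ i, y i), F (Fin.snoc y t)) y := by
    intro y
    by_cases hy : y ∈ unitSimplex n
    · simp only [hslice, Set.indicator_of_mem hy]
      exact integral_indicator measurableSet_Icc
    · simp [hslice, Set.indicator_of_notMem hy]
  rw [← integral_indicator (isClosed_unitSimplex _).measurableSet, ← he.integral_comp' G,
    Measure.volume_eq_prod, integral_prod_symm _ ?_]
  · simp only [he_apply]
    rw [funext hinner, integral_indicator (isClosed_unitSimplex _).measurableSet]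
  · rw [← Measure.volume_eq_prod]
    exact he.integrable_comp_emb (MeasurableEquiv.measurableEmbedding _) |>.mpr hG

theorem integral_pow_mul_one_sub_pow (a b : ℕ) :
    ∫ x in (0 : ℝ)..1, x ^ a * (1 - x) ^ b = (a ! * b ! : ℝ) / (a + b + 1)! := by
  induction b generalizing a with
  | zero =>
    simp [Nat.factorial_succ, field]
  | succ b ih =>
    have hsplit : ∀ x : ℝ,
        x ^ a * (1 - x) ^ (b + 1) = x ^ a * (1 - x) ^ b - x ^ (a + 1) * (1 - x) ^ b :=
      fun x => by ring
    simp_rw [hsplit]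
    rw [intervalIntegral.integral_sub (Continuous.intervalIntegrable (by fun_prop) _ _)
      (Continuous.intervalIntegrable (by fun_prop) _ _), ih, ih,
      show a + 1 + b + 1 = a + b + 1 + 1 by ring, show a + (b + 1) = a + b + 1 by ring,
      Nat.factorial_succ (a + b + 1), Nat.factorial_succ a, Nat.factorial_succ b]
    push_cast
    field_simp
    ring

theorem setIntegral_Icc_pow_mul_sub_pow (a b : ℕ) {s : ℝ} (hs : 0 ≤ s) :
    ∫ t in Set.Icc 0 s, t ^ a * (s - t) ^ b = s ^ (a + b + 1) * (a ! * b ! : ℝ) / (a + b + 1)! := by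
  rw [integral_Icc_eq_integral_Ioc, ← intervalIntegral.integral_of_le hs]
  have hscale : ∀ x : ℝ, (s * x) ^ a * (s - s * x) ^ b = s ^ (a + b) * (x ^ a * (1 - x) ^ b) :=
    fun x => by rw [← mul_one_sub, mul_pow, mul_pow]; ring
  have := intervalIntegral.smul_integral_comp_mul_left (fun t => t ^ a * (s - t) ^ b) s
    (a := 0) (b := 1)
  simp only [mul_zero, mul_one, hscale, intervalIntegral.integral_const_mul,
    integral_pow_mul_one_sub_pow, smul_eq_mul] at this
  rw [← this]
  ring

theorem setIntegral_unitSimplex_prod_pow_mul_pow (n : ℕ) (m : Fin n → ℕ) (b : ℕ) :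
    ∫ x in unitSimplex n, (∏ i, x i ^ m i) * (1 - ∑ i, x i) ^ b =
      (∏ i, ((m i)! : ℝ)) * b ! / (∑ i, m i + b + n)! := by
  induction n generalizing b with
  | zero =>
    have : unitSimplex 0 = Set.univ := by ext x; simp [unitSimplex]
    simp [this, measureReal_def, volume_pi, Nat.factorial_ne_zero]
  | succ n ih =>
    set a := m (Fin.last n) with ha
    have hF : Continuous fun x : Fin (n + 1) → ℝ => (∏ i, x i ^ m i) * (1 - ∑ i, x i) ^ b := by
      fun_prop
    have hinner : ∀ y ∈ unitSimplex n,
        ∫ t in Set.Icc 0 (1 - ∑ i, y i),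
            (∏ i, (Fin.snoc y t : Fin (n + 1) → ℝ) i ^ m i) *
              (1 - ∑ i, (Fin.snoc y t : Fin (n + 1) → ℝ) i) ^ b =
          (a ! * b ! / (a + b + 1)! : ℝ) *
            ((∏ i, y i ^ m i.castSucc) * (1 - ∑ i, y i) ^ (a + b + 1)) := by
      intro y hy
      have hs : 0 ≤ 1 - ∑ i, y i := sub_nonneg.mpr hy.2
      simp only [Fin.prod_univ_castSucc, Fin.sum_univ_castSucc, Fin.snoc_castSucc,
        Fin.snoc_last, ← sub_sub, mul_assoc]
      rw [integral_const_mul, setIntegral_Icc_pow_mul_sub_pow a b hs]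
      ring
    rw [setIntegral_unitSimplex_succ hF,
      setIntegral_congr_fun (isClosed_unitSimplex n).measurableSet hinner,
      integral_const_mul, ih, Fin.prod_univ_castSucc, Fin.sum_univ_castSucc, ← ha,
      show ∀ k : ℕ, k + (a + b + 1) + n = k + a + b + (n + 1) by intro k; ring]
    field_simp

noncomputable def baryPoly (n : ℕ) : Fin (n + 1) → MvPolynomial (Fin n) ℝ :=
  Fin.snoc MvPolynomial.X (1 - ∑ i, MvPolynomial.X i)

lemma eval_baryPoly {n : ℕ} (x : Fin n → ℝ) (j : Fin (n + 1)) :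
    MvPolynomial.eval x (baryPoly n j) = bary n x j := by
  induction j using Fin.lastCases <;> simp [baryPoly, bary]

lemma totalDegree_baryPoly_le {n : ℕ} (j : Fin (n + 1)) : (baryPoly n j).totalDegree ≤ 1 := by
  induction j using Fin.lastCases with
  | last =>
    simp only [baryPoly, Fin.snoc_last]
    refine (MvPolynomial.totalDegree_sub _ _).trans (max_le (by simp) ?_)
    exact (MvPolynomial.totalDegree_finsetSum _ _).trans (Finset.sup_le fun i _ => by simp)
  | cast k => simp [baryPoly]

lemma continuous_bary {n : ℕ} (j : Fin (n + 1)) : Continuous fun x => bary n x j := by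
  simpa only [eval_baryPoly] using MvPolynomial.continuous_eval (baryPoly n j)

@[fun_prop]
lemma continuous_prod_bary_pow {n : ℕ} (γ : Fin (n + 1) → ℕ) :
    Continuous fun x => ∏ j, bary n x j ^ γ j :=
  continuous_finsetProd _ fun j _ => (continuous_bary j).pow _

@[fun_prop]
lemma continuous_bernFn (n N : ℕ) (α : Fin (n + 1) → ℕ) : Continuous (bernFn n N α) :=
  continuous_const.mul (continuous_prod_bary_pow α)

theorem setIntegral_unitSimplex_prod_bary_pow (n : ℕ) (γ : Fin (n + 1) → ℕ) :
    ∫ x in unitSimplex n, ∏ j, bary n x j ^ γ j = (∏ j, ((γ j)! : ℝ)) / (∑ j, γ j + n)! := by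
  simp only [Fin.prod_univ_castSucc, bary, Fin.snoc_castSucc, Fin.snoc_last]
  rw [setIntegral_unitSimplex_prod_pow_mul_pow, Fin.sum_univ_castSucc]

theorem setIntegral_bernFn_mul_prod_bary_pow {n N : ℕ} {α : Fin (n + 1) → ℕ} (hα : ∑ j, α j = N)
    (γ : Fin (n + 1) → ℕ) :
    ∫ x in unitSimplex n, bernFn n N α x * ∏ j, bary n x j ^ γ j =
      N ! / (N + ∑ j, γ j + n)! * ∏ j, ((α j + γ j)! / (α j)! : ℝ) := by
  simp only [bernFn, mul_assoc, ← prod_mul_distrib, ← pow_add]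
  rw [integral_const_mul, setIntegral_unitSimplex_prod_bary_pow, sum_add_distrib, hα,
    prod_div_distrib]
  ring

/-- Chu–Vandermonde in the binomial ring `ℤ` for `C(b + (-(a+1)), b)`, with upper negation on
both sides. -/
theorem sum_range_neg_one_pow_mul_choose_mul_add_choose (a b : ℕ) :
    ∑ g ∈ range (b + 1), (-1 : ℤ) ^ (b + g) * b.choose g * (a + g).choose g = a.choose b := by
  have key := Ring.add_choose_eq (r := (b : ℤ)) (s := -((a : ℤ) + 1)) b (Commute.all _ _)
  rw [show (b : ℤ) + -((a : ℤ) + 1) = -((a : ℤ) + 1 - b) by ring, Ring.choose_neg,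
    show (a : ℤ) + 1 - b + b - 1 = a by ring, Ring.choose_natCast,
    ← Nat.sum_antidiagonal_swap, Nat.sum_antidiagonal_eq_sum_range_succ_mk] at key
  have hterm : ∀ g ∈ range (b + 1),
      Ring.choose (b : ℤ) (g, b - g).swap.1 * Ring.choose (-((a : ℤ) + 1)) (g, b - g).swap.2 =
        (-1) ^ g * (b.choose g * (a + g).choose g) := by
    intro g hg
    rw [Prod.swap_prod_mk, Ring.choose_natCast, Nat.choose_symm (by grind), Ring.choose_neg,
      show (a : ℤ) + 1 + g - 1 = (a + g : ℕ) by push_cast; ring, Ring.choose_natCast]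
    simp only [Int.negOnePow_def, zpow_natCast, Units.smul_def, Units.val_pow_eq_pow_val,
      Units.val_neg, Units.val_one, Int.zsmul_eq_mul]
    ring
  rw [sum_congr rfl hterm, Int.negOnePow_def, zpow_natCast, Units.smul_def] at key
  push_cast [smul_eq_mul] at key
  have hsign : ∀ g, (-1 : ℤ) ^ (b + g) = (-1) ^ b * (-1) ^ g := fun g => pow_add _ _ _
  simp only [hsign, mul_assoc, ← mul_sum]
  rw [← key, ← mul_assoc, ← pow_add, ← two_mul, pow_mul, neg_one_sq, one_pow, one_mul]

/-- The polynomial `q_β = ∑_{γ ≤ β} κ_γ λ^γ`: `κ_γ` cancels the factor `N! / (N + |γ| + n)!` of the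
moment of `b^N_α` against `λ^γ` and turns `∏_j (α_j + γ_j)! / α_j!` into `∏_j C(α_j + γ_j, γ_j)`,
which the binomial inversion then sums coordinatewise to `∏_j C(α_j, β_j)`. -/
noncomputable def binomialDual (n N : ℕ) (β : Fin (n + 1) → ℕ) : MvPolynomial (Fin n) ℝ :=
  ∑ γ ∈ Fintype.piFinset fun j => range (β j + 1),
    MvPolynomial.C ((N + ∑ j, γ j + n)! / N ! *
      ∏ j, ((-1) ^ (β j + γ j) * (β j).choose (γ j) / (γ j)! : ℝ)) * ∏ j, baryPoly n j ^ γ j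

lemma totalDegree_binomialDual_le (n N : ℕ) (β : Fin (n + 1) → ℕ) :
    (binomialDual n N β).totalDegree ≤ ∑ j, β j := by
  refine (MvPolynomial.totalDegree_finsetSum _ _).trans (Finset.sup_le fun γ hγ => ?_)
  refine (MvPolynomial.totalDegree_mul _ _).trans ?_
  rw [MvPolynomial.totalDegree_C, zero_add]
  refine (MvPolynomial.totalDegree_finsetProd _ _).trans (sum_le_sum fun j _ => ?_)
  have hγj : γ j ≤ β j := Nat.lt_succ_iff.mp (mem_range.mp (Fintype.mem_piFinset.mp hγ j))
  calc (baryPoly n j ^ γ j).totalDegree ≤ γ j * (baryPoly n j).totalDegree :=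
        MvPolynomial.totalDegree_pow _ _
    _ ≤ β j := by nlinarith [totalDegree_baryPoly_le j]

theorem setIntegral_bernFn_mul_binomialDual {n N : ℕ} {α : Fin (n + 1) → ℕ} (hα : ∑ j, α j = N)
    (β : Fin (n + 1) → ℕ) :
    ∫ x in unitSimplex n, bernFn n N α x * MvPolynomial.eval x (binomialDual n N β) =
      ∏ j, ((α j).choose (β j) : ℝ) := by
  set coeff : (Fin (n + 1) → ℕ) → ℝ := fun γ => (N + ∑ j, γ j + n)! / N ! *
      ∏ j, ((-1) ^ (β j + γ j) * (β j).choose (γ j) / (γ j)! : ℝ)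
  have hterm : ∀ γ, ∫ x in unitSimplex n, bernFn n N α x * (coeff γ * ∏ j, bary n x j ^ γ j) =
      ∏ j, ((-1) ^ (β j + γ j) * (β j).choose (γ j) * (α j + γ j).choose (γ j) : ℝ) := by
    intro γ
    simp only [mul_left_comm (bernFn n N α _), integral_const_mul,
      setIntegral_bernFn_mul_prod_bary_pow hα, coeff, ← Nat.choose_symm_add, Nat.cast_add_choose]
    rw [mul_mul_mul_comm, div_mul_div_cancel₀ (by positivity), div_self (by positivity), one_mul,
      ← prod_mul_distrib]
    refine prod_congr rfl fun j _ => ?_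
    field_simp
  simp only [binomialDual, map_sum, map_mul, MvPolynomial.eval_C, map_prod, map_pow, eval_baryPoly,
    mul_sum]
  rw [integral_finsetSum _ fun γ _ => integrableOn_unitSimplex (by fun_prop)]
  rw [sum_congr rfl fun γ _ => hterm γ, ← prod_univ_sum (fun j => range (β j + 1))
    fun j g => ((-1) ^ (β j + g) * (β j).choose g * (α j + g).choose g : ℝ)]
  refine prod_congr rfl fun j _ => ?_
  exact_mod_cast sum_range_neg_one_pow_mul_choose_mul_add_choose (α j) (β j)

theorem setIntegral_mul_binomialDual {n N : ℕ} {p : (Fin n → ℝ) → ℝ}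
    {c : (Fin (n + 1) → ℕ) → ℝ}
    (hc : ∀ x, p x = ∑ α ∈ Nat.antidiagonalTuple (n + 1) N, c α * bernFn n N α x)
    (β : Fin (n + 1) → ℕ) :
    ∫ x in unitSimplex n, p x * MvPolynomial.eval x (binomialDual n N β) =
      ∑ α ∈ Nat.antidiagonalTuple (n + 1) N, c α * ∏ j, ((α j).choose (β j) : ℝ) := by
  simp only [hc, sum_mul, mul_assoc]
  rw [integral_finsetSum]
  · refine sum_congr rfl fun α hα => ?_
    rw [integral_const_mul, setIntegral_bernFn_mul_binomialDual (Nat.mem_antidiagonalTuple.mp hα)]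
  · exact fun α _ => integrableOn_unitSimplex <|
      continuous_const.mul ((continuous_bernFn n N α).mul (MvPolynomial.continuous_eval _))

lemma sum_mul_elevEntryR {n m : ℕ} (f : (Fin n → ℕ) → ℝ) {β : Fin n → ℕ} (hβ : ∑ k, β k + 1 = m) :
    ∑ γ ∈ Nat.antidiagonalTuple n m, f γ * elevEntryR n m γ β =
      ∑ j, f (β + Pi.single j 1) * ((β j + 1) / m) := by
  simp only [elevEntryR, mul_sum, mul_ite, mul_zero]
  rw [sum_comm]
  refine sum_congr rfl fun j _ => ?_
  rw [sum_ite_eq']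
  refine if_pos (Nat.mem_antidiagonalTuple.mpr ?_)
  simp [sum_add_distrib, hβ]

lemma succ_mul_choose_succ_right (n k : ℕ) :
    ((k : ℝ) + 1) * n.choose (k + 1) = (n - k) * n.choose k := by
  rcases le_or_gt k n with hk | hk
  · have := Nat.choose_succ_right_eq n k
    rw [← Nat.cast_sub hk]
    exact_mod_cast by linarith
  · simp [Nat.choose_eq_zero_of_lt hk, Nat.choose_eq_zero_of_lt (hk.trans (Nat.lt_succ_self k))]

lemma prod_choose_add_single {n : ℕ} (α β : Fin n → ℕ) (j : Fin n) :
    ((β j : ℝ) + 1) * ∏ k, ((α k).choose ((β + Pi.single j 1 : Fin n → ℕ) k) : ℝ) =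
      (α j - β j) * ∏ k, ((α k).choose (β k) : ℝ) := by
  classical
  have hoff : ∀ k ∈ ({j}ᶜ : Finset (Fin n)),
      ((α k).choose ((β + Pi.single j 1 : Fin n → ℕ) k) : ℝ) = (α k).choose (β k) := by
    intro k hk
    rw [Pi.add_apply, Pi.single_eq_of_ne (by simpa using hk), add_zero]
  rw [Fintype.prod_eq_mul_prod_compl j, Fintype.prod_eq_mul_prod_compl j, prod_congr rfl hoff,
    Pi.add_apply, Pi.single_eq_same, ← mul_assoc, ← mul_assoc, succ_mul_choose_succ_right]

lemma prod_choose_eq_ite {n : ℕ} (α β : Fin n → ℕ) (h : ∑ k, α k = ∑ k, β k) :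
    ∏ k, ((α k).choose (β k) : ℝ) = if α = β then 1 else 0 := by
  split_ifs with hαβ
  · simp [hαβ]
  · obtain ⟨k, hk⟩ : ∃ k, α k < β k := by
      by_contra! hle
      exact hαβ <| funext fun k =>
        ((sum_eq_sum_iff_of_le fun k _ => hle k).mp h.symm k (mem_univ k)).symm
    exact prod_eq_zero (mem_univ k) (by simp [Nat.choose_eq_zero_of_lt hk])

theorem elevComp_eq_prod_choose {n N i : ℕ} (hi : i ≤ N) {α β : Fin n → ℕ}
    (hα : ∑ k, α k = N) (hβ : ∑ k, β k = N - i) :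
    elevComp n N i α β = (∏ k, ((α k).choose (β k) : ℝ)) * (N - i)! * i ! / N ! := by
  induction i generalizing β with
  | zero =>
    rw [elevComp, prod_choose_eq_ite α β (by omega)]
    split_ifs <;> simp [Nat.factorial_ne_zero]
  | succ i ih =>
    obtain ⟨m, rfl⟩ := Nat.exists_eq_add_of_le hi
    rw [show i + 1 + m - (i + 1) = m by omega] at hβ ⊢
    have hterm : ∀ j,
        elevComp n (i + 1 + m) i α (β + Pi.single j 1) * ((β j + 1) / (m + 1 : ℕ)) =
          (α j - β j) *
            ((∏ k, ((α k).choose (β k) : ℝ)) * (m + 1)! * i ! / (i + 1 + m)! / (m + 1)) := by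
      intro j
      rw [ih (by omega) (by simp [sum_add_distrib, hβ]; omega), show i + 1 + m - i = m + 1 by omega]
      push_cast
      linear_combination ((m + 1)! * i ! / (i + 1 + m)! / (m + 1) : ℝ) *
        prod_choose_add_single α β j
    rw [elevComp, show i + 1 + m - i = m + 1 by omega, sum_mul_elevEntryR _ (by omega),
      sum_congr rfl fun j _ => hterm j, ← sum_mul, sum_sub_distrib]
    have hsum : ∑ j, (α j : ℝ) - ∑ j, (β j : ℝ) = i + 1 := by
      rw [← Nat.cast_sum, ← Nat.cast_sum, hα, hβ]; push_cast; ring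
    rw [hsum, Nat.factorial_succ m, Nat.factorial_succ i]
    push_cast
    field_simp

theorem stmt8_general (d N i : ℕ) (hi2 : i ≤ N)
    (p : (Fin d → ℝ) → ℝ)
    (horth : ∀ q : MvPolynomial (Fin d) ℝ, q.totalDegree ≤ N - i →
      ∫ x in unitSimplex d, p x * MvPolynomial.eval x q = 0)
    (c : (Fin (d + 1) → ℕ) → ℝ)
    (hc : ∀ x, p x = ∑ α ∈ Finset.Nat.antidiagonalTuple (d + 1) N, c α * bernFn d N α x) :
    ∀ β : Fin (d + 1) → ℕ, (∑ k, β k) = N - i →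
      ∑ α ∈ Finset.Nat.antidiagonalTuple (d + 1) N, elevComp (d + 1) N i α β * c α = 0 := by
  intro β hβ
  have hpair := horth (binomialDual d N β) (hβ ▸ totalDegree_binomialDual_le d N β)
  rw [setIntegral_mul_binomialDual hc] at hpair
  calc ∑ α ∈ Nat.antidiagonalTuple (d + 1) N, elevComp (d + 1) N i α β * c α
      = (N - i)! * i ! / N ! * ∑ α ∈ Nat.antidiagonalTuple (d + 1) N,
          c α * ∏ j, ((α j).choose (β j) : ℝ) := by
        rw [mul_sum]
        refine sum_congr rfl fun α hα => ?_
        rw [elevComp_eq_prod_choose hi2 (Nat.mem_antidiagonalTuple.mp hα) hβ]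
        ring
    _ = 0 := by rw [hpair, mul_zero]

/-- (From Lemma A.2: degree reduction annihilates high modes.)  Let `d ≥ 1`, `N ≥ 1`,
`1 ≤ i ≤ N`.  If `p : ℝ^d → ℝ` is a polynomial function which is `L²(T_d)`-orthogonal
to every polynomial of total degree at most `N−i`, and `c` is a vector of degree-`N`
Bernstein coefficients for `p`, then `(E^N_{N−i})ᵀ c = 0`. -/
theorem stmt8 (d N i : ℕ) (hd : 1 ≤ d) (hN : 1 ≤ N) (hi1 : 1 ≤ i) (hi2 : i ≤ N)
    (p : (Fin d → ℝ) → ℝ)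
    (hp : ∃ P : MvPolynomial (Fin d) ℝ, ∀ x, MvPolynomial.eval x P = p x)
    (horth : ∀ q : MvPolynomial (Fin d) ℝ, q.totalDegree ≤ N - i →
      ∫ x in unitSimplex d, p x * MvPolynomial.eval x q = 0)
    (c : (Fin (d + 1) → ℕ) → ℝ)
    (hc : ∀ x, p x = ∑ α ∈ Finset.Nat.antidiagonalTuple (d + 1) N, c α * bernFn d N α x) :
    ∀ β : Fin (d + 1) → ℕ, (∑ k, β k) = N - i →
      ∑ α ∈ Finset.Nat.antidiagonalTuple (d + 1) N, elevComp (d + 1) N i α β * c α = 0 :=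
  stmt8_general d N i hi2 p horth c hc
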